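/- arXiv:2205.07487 — 2 statements merged into one kernel-verified Lean document; each statement's English description precedes it below -/
import Mathlib

section
/- With θ(t,λ) = max{0, t^{-1}p₀(tλ) − 1} for λ ≥ 0 (p₀ as above), θ(t,·) vanishes precisely when: |λ| ≤ β_c/(2t) + 1/β_c if t ≥ β_c²/2, and |λ| ≤ √(2/t) if t < β_c²/2. Moreover at these boundary values the right derivative ∂_λθ jumps from 0 to a strictly positive value (first-order transition). -/
/-!
`p0` is the free energy of the random energy model: it glues `β²/2` to its tangent line at `β_c`
(slope `β_c`, value `ln 2`), so it is `C¹` with `p0' β = min β β_c` and strictly increasing on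
`[0, ∞)`. Hence `θ(t, λ) = 0` iff `p0 (t |λ|) ≤ t = p0 (t λ*)` iff `|λ| ≤ λ*`, where `t λ*` is
`√(2t)` below `β_c` and `t / β_c + β_c / 2` above it. Past `λ*` the maximum in `θ` is attained by
`t⁻¹ p0 (t λ) - 1`, whose slope at `λ*` is `min (t λ*) β_c > 0`, while `θ` vanishes to the left.
-/

noncomputable def βc : ℝ := Real.sqrt (2 * Real.log 2)

noncomputable def p0 (β : ℝ) : ℝ := if β ≤ βc then β ^ 2 / 2 else β * βc - Real.log 2

noncomputable def θ (t l : ℝ) : ℝ := max 0 (t⁻¹ * p0 (t * |l|) - 1)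

open Set

lemma βc_pos : 0 < βc := Real.sqrt_pos.2 (by linarith [Real.log_pos one_lt_two])

lemma βc_sq : βc ^ 2 = 2 * Real.log 2 :=
  Real.sq_sqrt (by linarith [Real.log_pos one_lt_two])

lemma p0_eqOn_Iic : EqOn p0 (fun β => β ^ 2 / 2) (Iic βc) := fun _ hβ => if_pos hβ

lemma p0_eqOn_Ici : EqOn p0 (fun β => β * βc - Real.log 2) (Ici βc) := by
  intro β hβ
  rcases (mem_Ici.1 hβ).eq_or_lt with rfl | hlt
  · rw [p0_eqOn_Iic self_mem_Iic]
    linear_combination -βc_sq / 2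
  · exact if_neg hlt.not_ge

lemma hasDerivAt_p0 (β : ℝ) : HasDerivAt p0 (min β βc) β := by
  have hsq : ∀ x, HasDerivAt (fun β : ℝ => β ^ 2 / 2) x x := fun x => by
    simpa using (hasDerivAt_pow 2 x).div_const 2
  have hlin : ∀ x, HasDerivAt (fun β => β * βc - Real.log 2) βc x := fun x => by
    simpa using ((hasDerivAt_id x).mul_const βc).sub_const (Real.log 2)
  rcases lt_trichotomy β βc with hlt | rfl | hgt
  · rw [min_eq_left hlt.le]
    exact (hsq β).congr_of_eventuallyEq (p0_eqOn_Iic.eventuallyEq_of_mem (Iic_mem_nhds hlt))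
  · have hleft := ((hsq βc).hasDerivWithinAt (s := Iic βc)).congr p0_eqOn_Iic
      (p0_eqOn_Iic self_mem_Iic)
    have hright := ((hlin βc).hasDerivWithinAt (s := Ici βc)).congr p0_eqOn_Ici
      (p0_eqOn_Ici self_mem_Ici)
    rw [min_self]
    simpa [Iic_union_Ici] using hleft.union hright
  · rw [min_eq_right hgt.le]
    exact (hlin β).congr_of_eventuallyEq (p0_eqOn_Ici.eventuallyEq_of_mem (Ici_mem_nhds hgt))

lemma p0_strictMonoOn : StrictMonoOn p0 (Ici 0) := by
  refine strictMonoOn_of_deriv_pos (convex_Ici 0)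
    (fun β _ => (hasDerivAt_p0 β).continuousAt.continuousWithinAt) fun β hβ => ?_
  rw [interior_Ici] at hβ
  rw [(hasDerivAt_p0 β).deriv]
  exact lt_min hβ βc_pos

noncomputable def activeEdge (t : ℝ) : ℝ :=
  if βc ^ 2 / 2 ≤ t then βc / (2 * t) + 1 / βc else Real.sqrt (2 / t)

lemma activeEdge_pos {t : ℝ} (ht : 0 < t) : 0 < activeEdge t := by
  have hb := βc_pos
  unfold activeEdge
  split_ifs
  · positivity
  · exact Real.sqrt_pos.2 (by positivity)

lemma p0_mul_activeEdge {t : ℝ} (ht : 0 < t) : p0 (t * activeEdge t) = t := by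
  have hb := βc_pos
  unfold activeEdge
  split_ifs with h
  · have hedge : t * (βc / (2 * t) + 1 / βc) = βc / 2 + t / βc := by field_simp
    have hge : βc ≤ βc / 2 + t / βc := by
      rw [← sub_nonneg, show βc / 2 + t / βc - βc = (t - βc ^ 2 / 2) / βc by field_simp; ring]
      exact div_nonneg (by linarith) hb.le
    rw [hedge, p0_eqOn_Ici hge]
    field_simp
    linear_combination βc_sq
  · have hedge : t * Real.sqrt (2 / t) = Real.sqrt (2 * t) := by
      rw [show 2 * t = t ^ 2 * (2 / t) by field_simp, Real.sqrt_mul (by positivity),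
        Real.sqrt_sq ht.le]
    have hle : Real.sqrt (2 * t) ≤ βc := by
      rw [Real.sqrt_le_left hb.le]
      linarith
    rw [hedge, p0_eqOn_Iic hle]
    dsimp only
    rw [Real.sq_sqrt (by positivity)]
    ring

lemma θ_eq_zero_iff {t : ℝ} (ht : 0 < t) (l : ℝ) : θ t l = 0 ↔ |l| ≤ activeEdge t := by
  have hmem : ∀ {x}, 0 ≤ x → t * x ∈ Ici 0 := fun hx => mul_nonneg ht.le hx
  have key := p0_strictMonoOn.le_iff_le (hmem (abs_nonneg l)) (hmem (activeEdge_pos ht).le)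
  rw [p0_mul_activeEdge ht, mul_le_mul_iff_right₀ ht] at key
  rw [θ, max_eq_left_iff, sub_nonpos, inv_mul_le_iff₀ ht, mul_one, key]

lemma hasDerivWithinAt_θ_Ici {t l : ℝ} (ht : 0 < t) (hl : activeEdge t ≤ l) :
    HasDerivWithinAt (θ t) (min (t * l) βc) (Ici l) l := by
  have hedge := activeEdge_pos ht
  have hpos : ∀ {x}, l ≤ x → 0 < x := fun hx => hedge.trans_le (hl.trans hx)
  have heq : EqOn (θ t) (fun x => t⁻¹ * p0 (t * x) - 1) (Ici l) := by
    intro x hx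
    have hx := mem_Ici.1 hx
    have hp : t ≤ p0 (t * x) := calc
      t = p0 (t * activeEdge t) := (p0_mul_activeEdge ht).symm
      _ ≤ p0 (t * x) := p0_strictMonoOn.monotoneOn (mul_nonneg ht.le hedge.le)
        (mul_nonneg ht.le (hpos hx).le) (mul_le_mul_of_nonneg_left (hl.trans hx) ht.le)
    rw [θ, abs_of_pos (hpos hx), max_eq_right]
    rwa [sub_nonneg, le_inv_mul_iff₀ ht, mul_one]
  have hderiv : HasDerivAt (fun x => t⁻¹ * p0 (t * x) - 1) (min (t * l) βc) l := by
    refine ((((hasDerivAt_p0 (t * l)).comp l ((hasDerivAt_id l).const_mul t)).const_mul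
      t⁻¹).sub_const 1).congr_deriv ?_
    field_simp
  exact hderiv.hasDerivWithinAt.congr heq (heq self_mem_Ici)

/-- The Active phase: `θ(t,·)` vanishes exactly for `|λ| ≤ β_c/(2t) + 1/β_c` when
`t ≥ β_c²/2`, and for `|λ| ≤ √(2/t)` when `t < β_c²/2`; at the boundary value the
left derivative is `0` while the right derivative is strictly positive
(first-order transition). -/
theorem stmt8 (t : ℝ) (ht : 0 < t) :
    (∀ l : ℝ, θ t l = 0 ↔
      (if βc ^ 2 / 2 ≤ t then |l| ≤ βc / (2 * t) + 1 / βc else |l| ≤ Real.sqrt (2 / t))) ∧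
    (∀ lstar : ℝ,
      lstar = (if βc ^ 2 / 2 ≤ t then βc / (2 * t) + 1 / βc else Real.sqrt (2 / t)) →
      HasDerivWithinAt (θ t) 0 (Set.Iic lstar) lstar ∧
      ∃ d > 0, HasDerivWithinAt (θ t) d (Set.Ici lstar) lstar) := by
  refine ⟨fun l => (θ_eq_zero_iff ht l).trans (apply_ite (|l| ≤ ·) _ _ _).to_iff, ?_⟩
  rintro lstar (hstar : lstar = activeEdge t)
  have hpos : 0 < lstar := hstar ▸ activeEdge_pos ht
  have hzero : EqOn (θ t) 0 (Icc (-lstar) lstar) := fun x hx =>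
    (θ_eq_zero_iff ht x).2 (hstar ▸ abs_le.2 hx)
  refine ⟨?_, min (t * lstar) βc, lt_min (by positivity) βc_pos,
    hasDerivWithinAt_θ_Ici ht hstar.ge⟩
  exact (hasDerivWithinAt_const lstar _ 0).congr_of_eventuallyEq
    (hzero.eventuallyEq_of_mem (Icc_mem_nhdsLE (neg_lt_self hpos)))
    (hzero (right_mem_Icc.2 (neg_le_self hpos.le)))
end

section
/- For any t > 0 the function λ ↦ θ(t,λ) := max{0, t^{-1}p₀(t|λ|) − 1} is convex on ℝ and even, and it is differentiable everywhere except on the first-order transition line: at λ* = β_c/(2t) + 1/β_c (when t ≥ β_c²/2) or λ* = √(2/t) (when t < β_c²/2), the left derivative is 0 while the right derivative is strictly positive. -/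
/-!
Write `θ t l = max 0 (g |l|)` with `g x = t⁻¹ p₀(t x) - 1`. Since `p₀' = min · β_c`, the function
`g` is C¹ and convex with `g' x = min (t x) β_c > 0` for `x > 0`, so `θ t` is convex, and `λ*` is
the unique positive zero of `g`, i.e. `p₀(t λ*) = t`. Thus `θ t` vanishes on `[-λ*, λ*]` and equals
`g ∘ |·|` outside it, which gives smoothness away from `±λ*` and the one-sided derivatives
`0` and `g' λ* > 0` at `λ*`.
-/

open Set

lemma p0_of_le_βc {β : ℝ} (h : β ≤ βc) : p0 β = β ^ 2 / 2 := if_pos h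

-- At `β = βc` both branches agree because `βc ^ 2 / 2 = log 2`.
lemma p0_of_βc_le {β : ℝ} (h : βc ≤ β) : p0 β = β * βc - Real.log 2 := by
  rcases h.eq_or_lt with rfl | h
  · rw [p0_of_le_βc le_rfl]
    nlinarith [βc_sq]
  · exact if_neg h.not_ge

-- `θ t l` is definitionally `max 0 (θPre t |l|)`.
noncomputable def θPre (t x : ℝ) : ℝ := t⁻¹ * p0 (t * x) - 1

section θPre

variable {t : ℝ}

lemma hasDerivAt_θPre (ht : t ≠ 0) (x : ℝ) : HasDerivAt (θPre t) (min (t * x) βc) x := by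
  have h := (((hasDerivAt_p0 (t * x)).comp x ((hasDerivAt_id x).const_mul t)).const_mul
    t⁻¹).sub_const 1
  rwa [mul_one, mul_comm _ t, inv_mul_cancel_left₀ ht] at h

lemma differentiable_θPre (ht : t ≠ 0) : Differentiable ℝ (θPre t) :=
  fun x => (hasDerivAt_θPre ht x).differentiableAt

lemma convexOn_θPre (ht : 0 < t) : ConvexOn ℝ univ (θPre t) := by
  refine Monotone.convexOn_univ_of_deriv (differentiable_θPre ht.ne') fun a b hab => ?_
  rw [(hasDerivAt_θPre ht.ne' a).deriv, (hasDerivAt_θPre ht.ne' b).deriv]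
  gcongr

lemma strictMonoOn_θPre (ht : 0 < t) : StrictMonoOn (θPre t) (Ici 0) := by
  refine strictMonoOn_of_deriv_pos (convex_Ici 0)
    (differentiable_θPre ht.ne').continuous.continuousOn fun x hx => ?_
  rw [interior_Ici] at hx
  rw [(hasDerivAt_θPre ht.ne' x).deriv]
  exact lt_min (mul_pos ht hx) βc_pos

end θPre

lemma ConvexOn.comp_abs {f : ℝ → ℝ} (hf : ConvexOn ℝ (Ici 0) f) (hmono : MonotoneOn f (Ici 0)) :
    ConvexOn ℝ univ (fun x => f |x|) := by
  refine ⟨convex_univ, fun x _ y _ a b ha hb hab => ?_⟩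
  have hmem : 0 ≤ a * |x| + b * |y| := by positivity
  calc f |a • x + b • y| ≤ f (a * |x| + b * |y|) := by
        refine hmono (mem_Ici.2 (abs_nonneg _)) hmem ?_
        simpa [abs_mul, abs_of_nonneg ha, abs_of_nonneg hb] using abs_add_le (a * x) (b * y)
    _ ≤ a • f |x| + b • f |y| :=
        hf.2 (mem_Ici.2 (abs_nonneg x)) (mem_Ici.2 (abs_nonneg y)) ha hb hab

lemma convexOn_θ {t : ℝ} (ht : 0 < t) : ConvexOn ℝ univ (θ t) :=
  (convexOn_const 0 convex_univ).sup <|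
    ((convexOn_θPre ht).subset (subset_univ _) (convex_Ici 0)).comp_abs
      (strictMonoOn_θPre ht).monotoneOn

lemma differentiableAt_max_zero_of_neg {g : ℝ → ℝ} {x : ℝ} (hg : ContinuousAt g x) (hx : g x < 0) :
    DifferentiableAt ℝ (fun y => max 0 (g y)) x :=
  (differentiableAt_const 0).congr_of_eventuallyEq <|
    (hg.eventually_lt continuousAt_const hx).mono fun _ hy => max_eq_left hy.le

lemma differentiableAt_max_zero_of_pos {g : ℝ → ℝ} {x : ℝ} (hg : DifferentiableAt ℝ g x)
    (hx : 0 < g x) : DifferentiableAt ℝ (fun y => max 0 (g y)) x :=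
  hg.congr_of_eventuallyEq <|
    (continuousAt_const.eventually_lt hg.continuousAt hx).mono fun _ hy => max_eq_right hy.le

section ZeroCrossing

variable {f : ℝ → ℝ} {L : ℝ}

lemma differentiableAt_max_zero_comp_abs (hf : Differentiable ℝ f)
    (hmono : StrictMonoOn f (Ici 0)) (hL : 0 ≤ L) (hfL : f L = 0) {l : ℝ} (hl : |l| ≠ L) :
    DifferentiableAt ℝ (fun y => max 0 (f |y|)) l := by
  rcases hl.lt_or_gt with hlt | hgt
  · exact differentiableAt_max_zero_of_neg (hf.continuous.comp continuous_abs).continuousAt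
      (hfL ▸ hmono (abs_nonneg l) hL hlt)
  · have hl0 : l ≠ 0 := by
      rintro rfl
      exact hgt.not_ge (abs_zero.trans_le hL)
    exact differentiableAt_max_zero_of_pos ((hf _).comp l (differentiableAt_abs hl0))
      (hfL ▸ hmono hL (abs_nonneg l) hgt)

lemma hasDerivWithinAt_max_zero_comp_abs_Iic (hmono : MonotoneOn f (Ici 0)) (hL : 0 < L)
    (hfL : f L = 0) : HasDerivWithinAt (fun y => max 0 (f |y|)) 0 (Iic L) L := by
  have hzero : ∀ y ∈ Icc (-L) L, max 0 (f |y|) = 0 := fun y hy =>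
    max_eq_left (hfL ▸ hmono (mem_Ici.2 (abs_nonneg y)) hL.le (abs_le.2 hy))
  refine (hasDerivWithinAt_const L _ 0).congr_of_eventuallyEq ?_ (hzero L ⟨by linarith, le_rfl⟩)
  filter_upwards [Icc_mem_nhdsLE (by linarith : -L < L)] using hzero

lemma HasDerivAt.max_zero_comp_abs_Ici {f' : ℝ} (hf : HasDerivAt f f' L)
    (hmono : MonotoneOn f (Ici 0)) (hL : 0 ≤ L) (hfL : f L = 0) :
    HasDerivWithinAt (fun y => max 0 (f |y|)) f' (Ici L) L := by
  have hpos : ∀ y ∈ Ici L, max 0 (f |y|) = f y := fun y hy => by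
    rw [abs_of_nonneg (hL.trans hy)]
    exact max_eq_right (hfL ▸ hmono hL (hL.trans hy) hy)
  exact hf.hasDerivWithinAt.congr hpos (hpos L self_mem_Ici)

end ZeroCrossing

noncomputable def transitionPoint (t : ℝ) : ℝ :=
  if βc ^ 2 / 2 ≤ t then βc / (2 * t) + 1 / βc else Real.sqrt (2 / t)

section TransitionPoint

variable {t : ℝ}

lemma transitionPoint_pos (ht : 0 < t) : 0 < transitionPoint t := by
  have := βc_pos
  unfold transitionPoint
  split_ifs
  · positivity
  · exact Real.sqrt_pos.2 (by positivity)

lemma p0_mul_transitionPoint (ht : 0 < t) : p0 (t * transitionPoint t) = t := by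
  have hβ := βc_pos
  unfold transitionPoint
  split_ifs with h
  · have hmul : t * (βc / (2 * t) + 1 / βc) = βc / 2 + t / βc := by field_simp
    have hgap : βc / 2 + t / βc - βc = (t - βc ^ 2 / 2) / βc := by field_simp; ring
    have hge : βc ≤ βc / 2 + t / βc := sub_nonneg.1 (hgap ▸ div_nonneg (by linarith) hβ.le)
    rw [hmul, p0_of_βc_le hge, add_mul, div_mul_cancel₀ t hβ.ne']
    linear_combination βc_sq / 2
  · have hsq : (t * Real.sqrt (2 / t)) ^ 2 = 2 * t := by
      rw [mul_pow, Real.sq_sqrt (by positivity)]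
      field_simp
    have hle : t * Real.sqrt (2 / t) ≤ βc :=
      (pow_le_pow_iff_left₀ (by positivity) hβ.le two_ne_zero).1 (by rw [hsq]; linarith)
    rw [p0_of_le_βc hle, hsq]
    ring

lemma θPre_transitionPoint (ht : 0 < t) : θPre t (transitionPoint t) = 0 := by
  rw [θPre, p0_mul_transitionPoint ht, inv_mul_cancel₀ ht.ne', sub_self]

end TransitionPoint

/-- For any `t > 0`, `θ(t,·)` is even and convex, differentiable away from the
first-order transition points `±λ*`, and at `λ*` the left derivative is `0` while
the right derivative is strictly positive. -/
theorem stmt15 (t : ℝ) (ht : 0 < t) :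
    (∀ l : ℝ, θ t (-l) = θ t l) ∧ ConvexOn ℝ Set.univ (θ t) ∧
    (∀ lstar : ℝ,
      lstar = (if βc ^ 2 / 2 ≤ t then βc / (2 * t) + 1 / βc else Real.sqrt (2 / t)) →
      (∀ l : ℝ, |l| ≠ lstar → DifferentiableAt ℝ (θ t) l) ∧
      HasDerivWithinAt (θ t) 0 (Set.Iic lstar) lstar ∧
      ∃ d > 0, HasDerivWithinAt (θ t) d (Set.Ici lstar) lstar) := by
  refine ⟨fun l => by rw [θ, abs_neg, θ], convexOn_θ ht, ?_⟩
  rintro _ rfl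
  have hpos : 0 < transitionPoint t := transitionPoint_pos ht
  have hzero : θPre t (transitionPoint t) = 0 := θPre_transitionPoint ht
  have hmono := strictMonoOn_θPre ht
  exact ⟨fun l hl => differentiableAt_max_zero_comp_abs (differentiable_θPre ht.ne') hmono
      hpos.le hzero hl,
    hasDerivWithinAt_max_zero_comp_abs_Iic hmono.monotoneOn hpos hzero,
    _, lt_min (mul_pos ht hpos) βc_pos,
    (hasDerivAt_θPre ht.ne' _).max_zero_comp_abs_Ici hmono.monotoneOn hpos.le hzero⟩
end
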